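/- arXiv:1704.00668 — 6 statements merged into one kernel-verified Lean document; each statement's English description precedes it below -/
import Mathlib

section
/- Let A^1,...,A^m be symmetric n×n real matrices, each extended to a derivation on the exterior algebra Λ*ℝⁿ (i.e. A(ω∧η)=A(ω)∧η+ω∧A(η), agreeing with the matrix action on Λ¹ℝⁿ=ℝⁿ). Then for every p with 0≤p≤n and every ω∈Λᵖℝⁿ, one has Σ_{α=1}^m |A^α ω|² ≤ p² · ‖Σ_{α=1}^m (A^α)²‖_op · |ω|², where ‖·‖_op is the operator norm on ℝⁿ and |·| the standard Euclidean norm on Λᵖℝⁿ. -/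
/-!
**Statement 0.** We model `Λᵖℝⁿ` concretely as alternating `p`-tensors, i.e. functions
`ω : (Fin p → Fin n) → ℝ` which are antisymmetric under permutations of the arguments
(with respect to the orthonormal basis `e_{i₁} ∧ ⋯ ∧ e_{i_p}`, `i₁ < ⋯ < i_p`, this
gives exactly `Λᵖℝⁿ`, the induced inner product being `⟨ω, η⟩ = (1/p!) Σ_s ω(s)·η(s)`).

A symmetric matrix `A` acts on `Λᵖℝⁿ` as the unique derivation extending its action on
`ℝⁿ = Λ¹ℝⁿ`; in components this is
`(Aω)(i₁,…,i_p) = Σ_k Σ_j A_{i_k j} · ω(i₁,…,j,…,i_p)` (the `j` in the `k`-th slot).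

The claim: for symmetric matrices `A^1, …, A^m`, every `0 ≤ p ≤ n` and every
`ω ∈ Λᵖℝⁿ`, one has `Σ_α |A^α ω|² ≤ p² · ‖Σ_α (A^α)²‖_op · |ω|²`.
-/

/-- An alternating `p`-tensor on `ℝⁿ` (component model of `Λᵖℝⁿ`). -/
def IsAlternatingTensor {n p : ℕ} (ω : (Fin p → Fin n) → ℝ) : Prop :=
  ∀ (s : Fin p → Fin n) (σ : Equiv.Perm (Fin p)),
    ω (s ∘ σ) = ((Equiv.Perm.sign σ : ℤ) : ℝ) * ω s

/-- The derivation extension of a matrix `A` to `p`-tensors, agreeing with the matrix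
action on `Λ¹ℝⁿ = ℝⁿ` and satisfying the Leibniz rule on wedge products. -/
def derivExt {n : ℕ} (A : Matrix (Fin n) (Fin n) ℝ) (p : ℕ)
    (ω : (Fin p → Fin n) → ℝ) : (Fin p → Fin n) → ℝ :=
  fun s => ∑ k : Fin p, ∑ j : Fin n, A (s k) j * ω (Function.update s k j)

/-- The squared norm of a `p`-tensor, induced from the standard inner product of `ℝⁿ`:
the `e_{i₁} ∧ ⋯ ∧ e_{i_p}` with `i₁ < ⋯ < i_p` form an orthonormal basis. -/
noncomputable def tensorNormSq {n p : ℕ} (ω : (Fin p → Fin n) → ℝ) : ℝ :=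
  ((p.factorial : ℝ))⁻¹ * ∑ s : Fin p → Fin n, ω s ^ 2

/-!
Write `A ω = Σ_k A_k ω`, where `A_k` lets `A` act on the `k`-th slot only. By Cauchy–Schwarz,
`|A ω|² ≤ p Σ_k |A_k ω|²`. Freezing all slots but the `k`-th cuts `ω` into vectors of `ℝⁿ` on which
`A_k` is the matrix action, and for symmetric matrices `Σ_α |A^α v|² = ⟨v, Σ_α (A^α)² v⟩ ≤
‖Σ_α (A^α)²‖ |v|²`. Summing over the `p` slots gives the second factor `p`.
-/

open Matrix Finset RealInnerProductSpace

section MatrixBound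

variable {ι κ : Type*} [Fintype ι] [Fintype κ] [DecidableEq κ]

lemma dotProduct_mulVec_le_norm_toEuclideanCLM_mul (B : Matrix κ κ ℝ) (v : κ → ℝ) :
    v ⬝ᵥ B *ᵥ v ≤ ‖toEuclideanCLM (𝕜 := ℝ) (n := κ) B‖ * (v ⬝ᵥ v) := by
  set T := toEuclideanCLM (𝕜 := ℝ) (n := κ) B
  set u : EuclideanSpace ℝ κ := WithLp.toLp 2 v
  have hquad : v ⬝ᵥ B *ᵥ v = ⟪u, T u⟫ := (inner_toEuclideanCLM B u u).symm
  have hnorm : v ⬝ᵥ v = ‖u‖ ^ 2 := by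
    rw [← real_inner_self_eq_norm_sq, EuclideanSpace.inner_toLp_toLp, star_trivial]
  calc v ⬝ᵥ B *ᵥ v = ⟪u, T u⟫ := hquad
    _ ≤ ‖u‖ * ‖T u‖ := real_inner_le_norm _ _
    _ ≤ ‖u‖ * (‖T‖ * ‖u‖) := by gcongr; exact T.le_opNorm u
    _ = ‖T‖ * (v ⬝ᵥ v) := by rw [hnorm]; ring

lemma sum_mulVec_dotProduct_mulVec_self {A : ι → Matrix κ κ ℝ} (hA : ∀ α, (A α).IsSymm)
    (v : κ → ℝ) : ∑ α, (A α *ᵥ v) ⬝ᵥ (A α *ᵥ v) = v ⬝ᵥ (∑ α, A α ^ 2) *ᵥ v := by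
  rw [sum_mulVec, dotProduct_sum]
  refine sum_congr rfl fun α _ => ?_
  rw [sq, ← mulVec_mulVec, dotProduct_mulVec, ← mulVec_transpose, (hA α).eq, dotProduct_comm]

lemma sum_mulVec_dotProduct_mulVec_self_le {A : ι → Matrix κ κ ℝ} (hA : ∀ α, (A α).IsSymm)
    (v : κ → ℝ) :
    ∑ α, (A α *ᵥ v) ⬝ᵥ (A α *ᵥ v) ≤
      ‖toEuclideanCLM (𝕜 := ℝ) (n := κ) (∑ α, A α ^ 2)‖ * (v ⬝ᵥ v) := by
  rw [sum_mulVec_dotProduct_mulVec_self hA]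
  exact dotProduct_mulVec_le_norm_toEuclideanCLM_mul _ v

end MatrixBound

section SlotAction

variable {ι κ : Type*} [DecidableEq ι] [Fintype κ]

def slotAction (A : Matrix κ κ ℝ) (k : ι) (ω : (ι → κ) → ℝ) : (ι → κ) → ℝ :=
  fun s => ∑ j, A (s k) j * ω (Function.update s k j)

lemma derivExt_eq_sum_slotAction {n : ℕ} (A : Matrix (Fin n) (Fin n) ℝ) (p : ℕ)
    (ω : (Fin p → Fin n) → ℝ) : derivExt A p ω = ∑ k, slotAction A k ω := by
  ext s
  simp only [derivExt, slotAction, Finset.sum_apply]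

lemma sum_eq_sum_sum_funSplitAt_symm [Fintype ι] (k : ι) (F : (ι → κ) → ℝ) :
    ∑ s, F s = ∑ g : {j // j ≠ k} → κ, ∑ x, F ((Equiv.funSplitAt k κ).symm (x, g)) := by
  rw [← Equiv.sum_comp (Equiv.funSplitAt k κ).symm, Fintype.sum_prod_type, sum_comm]

lemma slotAction_funSplitAt_symm (A : Matrix κ κ ℝ) (k : ι) (ω : (ι → κ) → ℝ) (x : κ)
    (g : {j // j ≠ k} → κ) :
    slotAction A k ω ((Equiv.funSplitAt k κ).symm (x, g)) =
      (A *ᵥ fun j => ω ((Equiv.funSplitAt k κ).symm (j, g))) x := by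
  have hupdate : ∀ j, Function.update ((Equiv.funSplitAt k κ).symm (x, g)) k j =
      (Equiv.funSplitAt k κ).symm (j, g) := by
    intro j
    funext l
    rcases eq_or_ne l k with rfl | h
    · simp
    · simp [h]
  simp [slotAction, mulVec, dotProduct, hupdate]

variable [Fintype ι] [DecidableEq κ]

lemma sum_sum_sq_slotAction_le {ι' : Type*} [Fintype ι'] {A : ι' → Matrix κ κ ℝ}
    (hA : ∀ α, (A α).IsSymm) (k : ι) (ω : (ι → κ) → ℝ) :
    ∑ α, ∑ s, slotAction (A α) k ω s ^ 2 ≤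
      ‖toEuclideanCLM (𝕜 := ℝ) (n := κ) (∑ α, A α ^ 2)‖ * ∑ s, ω s ^ 2 := by
  set slice : ({j // j ≠ k} → κ) → κ → ℝ := fun g j => ω ((Equiv.funSplitAt k κ).symm (j, g))
  have hslot : ∀ α, ∑ s, slotAction (A α) k ω s ^ 2 =
      ∑ g, (A α *ᵥ slice g) ⬝ᵥ (A α *ᵥ slice g) := fun α => by
    simp only [sum_eq_sum_sum_funSplitAt_symm k, slotAction_funSplitAt_symm, dotProduct, sq, slice]
  have hω : ∑ s, ω s ^ 2 = ∑ g, slice g ⬝ᵥ slice g := by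
    rw [sum_eq_sum_sum_funSplitAt_symm k]
    simp only [dotProduct, sq, slice]
  rw [hω, mul_sum]
  simp only [hslot]
  rw [sum_comm]
  exact sum_le_sum fun g _ => sum_mulVec_dotProduct_mulVec_self_le hA (slice g)

lemma sum_sum_sq_sum_slotAction_le {ι' : Type*} [Fintype ι'] {A : ι' → Matrix κ κ ℝ}
    (hA : ∀ α, (A α).IsSymm) (ω : (ι → κ) → ℝ) :
    ∑ α, ∑ s, (∑ k, slotAction (A α) k ω s) ^ 2 ≤
      (Fintype.card ι : ℝ) ^ 2 * ‖toEuclideanCLM (𝕜 := ℝ) (n := κ) (∑ α, A α ^ 2)‖ *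
        ∑ s, ω s ^ 2 := by
  set C := ‖toEuclideanCLM (𝕜 := ℝ) (n := κ) (∑ α, A α ^ 2)‖
  calc ∑ α, ∑ s, (∑ k, slotAction (A α) k ω s) ^ 2
      ≤ ∑ α, ∑ s, (Fintype.card ι : ℝ) * ∑ k, slotAction (A α) k ω s ^ 2 :=
        sum_le_sum fun α _ => sum_le_sum fun s _ => sq_sum_le_card_mul_sum_sq
    _ = Fintype.card ι * ∑ k, ∑ α, ∑ s, slotAction (A α) k ω s ^ 2 := by
        simp only [← mul_sum]
        rw [sum_congr rfl fun α _ => sum_comm, sum_comm]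
    _ ≤ Fintype.card ι * ∑ _k : ι, C * ∑ s, ω s ^ 2 := by
        gcongr with k
        exact sum_sum_sq_slotAction_le hA k ω
    _ = Fintype.card ι ^ 2 * C * ∑ s, ω s ^ 2 := by
        rw [sum_const, card_univ, nsmul_eq_mul]
        ring

end SlotAction

theorem sum_normSq_derivExt_le_general (n m p : ℕ)
    (A : Fin m → Matrix (Fin n) (Fin n) ℝ) (hA : ∀ α, (A α).IsSymm)
    (ω : (Fin p → Fin n) → ℝ) :
    ∑ α : Fin m, tensorNormSq (derivExt (A α) p ω) ≤
      (p : ℝ) ^ 2 * ‖Matrix.toEuclideanCLM (𝕜 := ℝ) (n := Fin n) (∑ α : Fin m, (A α) ^ 2)‖ *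
        tensorNormSq ω := by
  have hsum := sum_sum_sq_sum_slotAction_le hA ω
  rw [Fintype.card_fin] at hsum
  simp only [tensorNormSq, derivExt_eq_sum_slotAction, Finset.sum_apply, ← mul_sum]
  have hfactorial : (0 : ℝ) ≤ (p.factorial : ℝ)⁻¹ := by positivity
  calc (p.factorial : ℝ)⁻¹ * ∑ α, ∑ s, (∑ k, slotAction (A α) k ω s) ^ 2
      ≤ (p.factorial : ℝ)⁻¹ * ((p : ℝ) ^ 2 *
          ‖toEuclideanCLM (𝕜 := ℝ) (n := Fin n) (∑ α, A α ^ 2)‖ * ∑ s, ω s ^ 2) :=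
        mul_le_mul_of_nonneg_left hsum hfactorial
    _ = _ := by ring

theorem sum_normSq_derivExt_le (n m p : ℕ) (hp : p ≤ n)
    (A : Fin m → Matrix (Fin n) (Fin n) ℝ) (hA : ∀ α, (A α).IsSymm)
    (ω : (Fin p → Fin n) → ℝ) (hω : IsAlternatingTensor ω) :
    ∑ α : Fin m, tensorNormSq (derivExt (A α) p ω) ≤
      (p : ℝ) ^ 2 * ‖Matrix.toEuclideanCLM (𝕜 := ℝ) (n := Fin n) (∑ α : Fin m, (A α) ^ 2)‖ *
        tensorNormSq ω :=
  sum_normSq_derivExt_le_general n m p A hA ω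
end

section
/- Define α(c,p,n,h) := n·c + n³h²/(2p(n−p)) − n|n−2p|·h·√(n²h² + 4c·p(n−p)) / (2p(n−p)) for real c ≥ 0, h ≥ 0, integers n ≥ 2 and 1 ≤ p ≤ n−1. Then the minimum of α(c,p,n,h) over p ∈ {1,…,n−1} is attained at p=1 (equivalently p=n−1), i.e. min_{1≤p≤n−1} α(c,p,n,h) = n·c + n³h²/(2(n−1)) − n(n−2)h·√(n²h²+4c(n−1))/(2(n−1)). -/
/-!
Put `t = p(n-p)`, `s = √(n²h² + 4ct)` and `u = |n-2p|`. Since `u² = n² - 4t`, one has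
`s² - u²h² = 4t(c+h²)`, which turns `α` into `-nc + 2n(c+h²)·s/(s+uh)`. As `p` runs over
`1, …, n-1`, the product `t` is smallest and `u` is largest at `p = 1`, so `s` is smallest
and `uh` largest there, and `s/(s+uh)` is increasing in `s` and decreasing in `uh`.
-/

/-- The pinching function
`α(c,p,n,h) = n·c + n³h²/(2p(n−p)) − n|n−2p|·h·√(n²h² + 4c·p(n−p))/(2p(n−p))`. -/
noncomputable def pinchAlpha (c : ℝ) (p n : ℕ) (h : ℝ) : ℝ :=
  n * c + n ^ 3 * h ^ 2 / (2 * p * ((n : ℝ) - p)) -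
    n * |(n : ℝ) - 2 * p| * h * Real.sqrt (n ^ 2 * h ^ 2 + 4 * c * p * ((n : ℝ) - p)) /
      (2 * p * ((n : ℝ) - p))

noncomputable def pinchRoot (c : ℝ) (p n : ℕ) (h : ℝ) : ℝ :=
  Real.sqrt (n ^ 2 * h ^ 2 + 4 * c * p * ((n : ℝ) - p))

lemma div_add_le_div_add_of_le_of_le {s₁ s₂ b₁ b₂ : ℝ} (hs₁ : 0 < s₁) (hs : s₁ ≤ s₂)
    (hb₂ : 0 ≤ b₂) (hb : b₂ ≤ b₁) : s₁ / (s₁ + b₁) ≤ s₂ / (s₂ + b₂) := by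
  rw [div_le_div_iff₀ (by linarith) (by linarith)]
  nlinarith

lemma sub_one_le_mul_sub {P N : ℝ} (hP : 1 ≤ P) (hPN : P ≤ N - 1) : N - 1 ≤ P * (N - P) := by
  nlinarith

lemma abs_sub_two_mul_le {P N : ℝ} (hP : 1 ≤ P) (hPN : P ≤ N - 1) : |N - 2 * P| ≤ N - 2 :=
  abs_le.mpr ⟨by linarith, by linarith⟩

lemma mul_le_pinchRoot {c : ℝ} (hc : 0 ≤ c) (h : ℝ) {p n : ℕ} (hpn : p ≤ n) :
    n * h ≤ pinchRoot c p n h := by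
  have hPN : (p : ℝ) ≤ n := by exact_mod_cast hpn
  apply Real.le_sqrt_of_sq_le
  have : 0 ≤ c * p * ((n : ℝ) - p) := by positivity
  nlinarith

lemma pinchRoot_one_le {c : ℝ} (hc : 0 ≤ c) (h : ℝ) {p n : ℕ} (hp : 1 ≤ p) (hpn : p + 1 ≤ n) :
    pinchRoot c 1 n h ≤ pinchRoot c p n h := by
  have hP : (1 : ℝ) ≤ p := by exact_mod_cast hp
  have hPN : (p : ℝ) ≤ n - 1 := by
    have : (p : ℝ) + 1 ≤ n := by exact_mod_cast hpn
    linarith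
  apply Real.sqrt_le_sqrt
  have := mul_le_mul_of_nonneg_left (sub_one_le_mul_sub hP hPN) hc
  push_cast
  nlinarith

lemma pinchRoot_pos {c h : ℝ} (hc : 0 ≤ c) (hh : 0 < h) {p n : ℕ} (hn : 0 < n) (hpn : p ≤ n) :
    0 < pinchRoot c p n h :=
  (mul_pos (Nat.cast_pos.mpr hn) hh).trans_le (mul_le_pinchRoot hc h hpn)

lemma pinchAlpha_eq {c h : ℝ} (hc : 0 ≤ c) (hh : 0 < h) {p n : ℕ} (hp : 0 < p) (hpn : p < n) :
    pinchAlpha c p n h = -(n * c) + 2 * n * (c + h ^ 2) *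
      (pinchRoot c p n h / (pinchRoot c p n h + |(n : ℝ) - 2 * p| * h)) := by
  have hP : (0 : ℝ) < p := by exact_mod_cast hp
  have hPN : (p : ℝ) < n := by exact_mod_cast hpn
  have hs := pinchRoot_pos hc hh (hp.trans hpn) hpn.le
  have hs_sq : pinchRoot c p n h ^ 2 = n ^ 2 * h ^ 2 + 4 * c * p * ((n : ℝ) - p) :=
    Real.sq_sqrt (by nlinarith [mul_nonneg hc (mul_pos hP (sub_pos.mpr hPN)).le])
  have hu_sq : |(n : ℝ) - 2 * p| ^ 2 = ((n : ℝ) - 2 * p) ^ 2 := sq_abs _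
  have hNP : (n : ℝ) - p ≠ 0 := sub_ne_zero.mpr hPN.ne'
  have hden : pinchRoot c p n h + h * |(n : ℝ) - 2 * p| ≠ 0 := by positivity
  rw [pinchAlpha, ← pinchRoot]
  field_simp
  linear_combination (-(n * h * |(n : ℝ) - 2 * p|)) * hs_sq - n * h ^ 2 * pinchRoot c p n h * hu_sq

lemma pinchAlpha_one {c h : ℝ} {n : ℕ} (hn : 2 ≤ n) :
    pinchAlpha c 1 n h =
      n * c + n ^ 3 * h ^ 2 / (2 * ((n : ℝ) - 1)) -
        n * ((n : ℝ) - 2) * h * Real.sqrt (n ^ 2 * h ^ 2 + 4 * c * ((n : ℝ) - 1)) /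
          (2 * ((n : ℝ) - 1)) := by
  have hN : (2 : ℝ) ≤ n := by exact_mod_cast hn
  simp only [pinchAlpha, Nat.cast_one, mul_one, abs_of_nonneg (sub_nonneg.mpr hN)]

/-- For `c ≥ 0`, `h ≥ 0` and `n ≥ 2`, the minimum of `α(c,p,n,h)` over
integers `1 ≤ p ≤ n−1` is attained at `p = 1`, and equals
`n·c + n³h²/(2(n−1)) − n(n−2)h·√(n²h²+4c(n−1))/(2(n−1))`. -/
theorem pinchAlpha_min_at_one (c h : ℝ) (hc : 0 ≤ c) (hh : 0 ≤ h) (n : ℕ) (hn : 2 ≤ n) :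
    (∀ p : ℕ, 1 ≤ p → p ≤ n - 1 → pinchAlpha c 1 n h ≤ pinchAlpha c p n h) ∧
      pinchAlpha c 1 n h =
        n * c + n ^ 3 * h ^ 2 / (2 * ((n : ℝ) - 1)) -
          n * ((n : ℝ) - 2) * h * Real.sqrt (n ^ 2 * h ^ 2 + 4 * c * ((n : ℝ) - 1)) /
            (2 * ((n : ℝ) - 1)) := by
  refine ⟨fun p hp hpn => ?_, pinchAlpha_one hn⟩
  rcases hh.eq_or_lt with rfl | hh
  · simp [pinchAlpha]
  have hpn : p + 1 ≤ n := by omega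
  have hP : (1 : ℝ) ≤ p := by exact_mod_cast hp
  have hPN : (p : ℝ) ≤ n - 1 := by
    rw [le_sub_iff_add_le]
    exact_mod_cast hpn
  have habs_one : |(n : ℝ) - 2 * (1 : ℕ)| = n - 2 := by
    have hN : (2 : ℝ) ≤ n := by exact_mod_cast hn
    rw [Nat.cast_one, mul_one, abs_of_nonneg (sub_nonneg.mpr hN)]
  rw [pinchAlpha_eq hc hh one_pos (by omega), pinchAlpha_eq hc hh hp (by omega)]
  gcongr _ + _ * ?_
  refine div_add_le_div_add_of_le_of_le (pinchRoot_pos hc hh (by omega) (by omega))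
    (pinchRoot_one_le hc h hp hpn) (by positivity) ?_
  rw [habs_one]
  exact mul_le_mul_of_nonneg_right (abs_sub_two_mul_le hP hPN) hh.le
end

section
/- With α(c,p,n,h) := n·c + n³h²/(2p(n−p)) − n|n−2p|·h·√(n²h²+4c·p(n−p))/(2p(n−p)), for fixed c ≥ 0, integers n ≥ 2 and 1 ≤ p ≤ n−1, the minimum over h ≥ 0 of α(c,p,n,h) − n·h² equals 4c·p(n−p)/n, and equality holds if and only if n²h² + 4c·p(n−p) = n²c. -/
/-!
Write `P = p(n−p)`, `k = |n−2p|` and `s = √(n²h² + 4cP)`, so that `k² = n² − 4P`.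
Completing the square gives
`α(c,p,n,h) − n·h² − 4cP/n = (k·s − n²·h)² / (4P·n)`,
so the lower bound holds, with equality iff `k·s = n²·h`. Both sides are nonnegative, and
`k²s² − n⁴h² = 4P·(n²c − n²h² − 4cP)` turns this into `n²h² + 4cP = n²c`, which is attained
at `h = k√c/n`.
-/

open Real

section CompletingTheSquare

variable {N q c h s k : ℝ}

theorem sub_eq_sq_div_of_sq_eq (hq : q ≠ 0) (hNq : N - q ≠ 0) (hN : N ≠ 0)
    (hs : s ^ 2 = N ^ 2 * h ^ 2 + 4 * c * q * (N - q)) (hk : k ^ 2 = (N - 2 * q) ^ 2) :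
    N * c + N ^ 3 * h ^ 2 / (2 * q * (N - q)) - N * k * h * s / (2 * q * (N - q))
        - N * h ^ 2 - 4 * c * q * (N - q) / N
      = (k * s - N ^ 2 * h) ^ 2 / (4 * q * (N - q) * N) := by
  field_simp
  linear_combination (-2 * k ^ 2) * hs - 2 * (N ^ 2 * h ^ 2 + 4 * c * q * (N - q)) * hk

theorem mul_eq_iff_of_sq_eq (hqN : q * (N - q) ≠ 0) (hh : 0 ≤ h) (hk0 : 0 ≤ k) (hs0 : 0 ≤ s)
    (hs : s ^ 2 = N ^ 2 * h ^ 2 + 4 * c * q * (N - q)) (hk : k ^ 2 = (N - 2 * q) ^ 2) :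
    k * s = N ^ 2 * h ↔ N ^ 2 * h ^ 2 + 4 * c * q * (N - q) = N ^ 2 * c := by
  have hdiff : (k * s) ^ 2 - (N ^ 2 * h) ^ 2
      = 4 * (q * (N - q)) * (N ^ 2 * c - (N ^ 2 * h ^ 2 + 4 * c * q * (N - q))) := by
    linear_combination k ^ 2 * hs + (N ^ 2 * h ^ 2 + 4 * c * q * (N - q)) * hk
  rw [← sq_eq_sq₀ (by positivity) (by positivity), ← sub_eq_zero, hdiff, mul_eq_zero,
    or_iff_right (mul_ne_zero four_ne_zero hqN), sub_eq_zero, eq_comm]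

end CompletingTheSquare

section PinchAlpha

variable {c : ℝ} {n p : ℕ}

theorem pinchAlpha_radicand_nonneg (hc : 0 ≤ c) (hpn : p ≤ n) (h : ℝ) :
    0 ≤ (n : ℝ) ^ 2 * h ^ 2 + 4 * c * p * ((n : ℝ) - p) := by
  have : (p : ℝ) ≤ n := by exact_mod_cast hpn
  have : 0 ≤ (n : ℝ) - p := by linarith
  positivity

theorem pinchAlpha_sub_eq (hc : 0 ≤ c) (hp : 0 < p) (hpn : p < n) (h : ℝ) :
    pinchAlpha c p n h - n * h ^ 2 - 4 * c * p * ((n : ℝ) - p) / n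
      = (|(n : ℝ) - 2 * p| * √((n : ℝ) ^ 2 * h ^ 2 + 4 * c * p * ((n : ℝ) - p)) - n ^ 2 * h) ^ 2
          / (4 * p * ((n : ℝ) - p) * n) := by
  have hp' : (0 : ℝ) < p := by exact_mod_cast hp
  have hpn' : (p : ℝ) < n := by exact_mod_cast hpn
  exact sub_eq_sq_div_of_sq_eq hp'.ne' (by linarith) (by linarith)
    (sq_sqrt (pinchAlpha_radicand_nonneg hc hpn.le h)) (sq_abs _)

theorem pinchAlpha_sub_ge (hc : 0 ≤ c) (hp : 0 < p) (hpn : p < n) (h : ℝ) :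
    4 * c * p * ((n : ℝ) - p) / n ≤ pinchAlpha c p n h - n * h ^ 2 := by
  have hpn' : 0 < (n : ℝ) - p := sub_pos.mpr (by exact_mod_cast hpn)
  rw [← sub_nonneg, pinchAlpha_sub_eq hc hp hpn]
  positivity

theorem pinchAlpha_sub_eq_iff (hc : 0 ≤ c) (hp : 0 < p) (hpn : p < n) {h : ℝ} (hh : 0 ≤ h) :
    pinchAlpha c p n h - n * h ^ 2 = 4 * c * p * ((n : ℝ) - p) / n ↔
      (n : ℝ) ^ 2 * h ^ 2 + 4 * c * p * ((n : ℝ) - p) = n ^ 2 * c := by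
  have hp' : (0 : ℝ) < p := by exact_mod_cast hp
  have hpn' : 0 < (n : ℝ) - p := sub_pos.mpr (by exact_mod_cast hpn)
  have hden : 0 < 4 * p * ((n : ℝ) - p) * n := by
    have : (0 : ℝ) < n := by linarith
    positivity
  rw [← sub_eq_zero, pinchAlpha_sub_eq hc hp hpn, div_eq_zero_iff, or_iff_left hden.ne',
    pow_eq_zero_iff two_ne_zero, sub_eq_zero]
  exact mul_eq_iff_of_sq_eq (by positivity) hh (abs_nonneg _) (sqrt_nonneg _)
    (sq_sqrt (pinchAlpha_radicand_nonneg hc hpn.le h)) (sq_abs _)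

end PinchAlpha

theorem pinchAlpha_sub_min_general (c : ℝ) (hc : 0 ≤ c) (n p : ℕ)
    (hp1 : 1 ≤ p) (hp2 : p ≤ n - 1) :
    (∀ h : ℝ, 0 ≤ h → 4 * c * p * ((n : ℝ) - p) / n ≤ pinchAlpha c p n h - n * h ^ 2) ∧
      (∃ h : ℝ, 0 ≤ h ∧ pinchAlpha c p n h - n * h ^ 2 = 4 * c * p * ((n : ℝ) - p) / n) ∧
      (∀ h : ℝ, 0 ≤ h →
        (pinchAlpha c p n h - n * h ^ 2 = 4 * c * p * ((n : ℝ) - p) / n ↔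
          (n : ℝ) ^ 2 * h ^ 2 + 4 * c * p * ((n : ℝ) - p) = n ^ 2 * c)) := by
  have hp : 0 < p := hp1
  have hpn : p < n := by omega
  have hn : (n : ℝ) ≠ 0 := by exact_mod_cast (by omega : n ≠ 0)
  refine ⟨fun h _ => pinchAlpha_sub_ge hc hp hpn h,
    ⟨|(n : ℝ) - 2 * p| * √c / n, by positivity, ?_⟩,
    fun h hh => pinchAlpha_sub_eq_iff hc hp hpn hh⟩
  rw [pinchAlpha_sub_eq_iff hc hp hpn (by positivity), div_pow, mul_pow, sq_abs, sq_sqrt hc]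
  field_simp
  ring

/-- For fixed `c ≥ 0`, `n ≥ 2` and `1 ≤ p ≤ n−1`, the minimum over
`h ≥ 0` of `α(c,p,n,h) − n·h²` equals `4c·p(n−p)/n`, and equality holds at some `h ≥ 0`
if and only if `n²h² + 4c·p(n−p) = n²c`. -/
theorem pinchAlpha_sub_min (c : ℝ) (hc : 0 ≤ c) (n p : ℕ) (hn : 2 ≤ n)
    (hp1 : 1 ≤ p) (hp2 : p ≤ n - 1) :
    (∀ h : ℝ, 0 ≤ h → 4 * c * p * ((n : ℝ) - p) / n ≤ pinchAlpha c p n h - n * h ^ 2) ∧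
      (∃ h : ℝ, 0 ≤ h ∧ pinchAlpha c p n h - n * h ^ 2 = 4 * c * p * ((n : ℝ) - p) / n) ∧
      (∀ h : ℝ, 0 ≤ h →
        (pinchAlpha c p n h - n * h ^ 2 = 4 * c * p * ((n : ℝ) - p) / n ↔
          (n : ℝ) ^ 2 * h ^ 2 + 4 * c * p * ((n : ℝ) - p) = n ^ 2 * c)) :=
  pinchAlpha_sub_min_general c hc n p hp1 hp2
end

section
/- With α(c,p,n,h) := n·c + n³h²/(2p(n−p)) − n|n−2p|·h·√(n²h²+4c·p(n−p))/(2p(n−p)), for fixed c ≥ 0, integers n ≥ 2 and 1 ≤ p ≤ n−1, the minimum over h ≥ 0 of α(c,p,n,h) equals 2c·√(p(n−p)). -/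
section

variable {n m r c x s : ℝ}

theorem sq_sub_sq_eq_four_mul_sq (hmn : m ^ 2 + 4 * r ^ 2 = n ^ 2)
    (hs : s ^ 2 = x ^ 2 + 4 * c * r ^ 2) :
    (n * x ^ 2 + 2 * c * r ^ 2 * (n - 2 * r)) ^ 2 - (m * x * s) ^ 2 =
      4 * r ^ 2 * (x ^ 2 - c * r * (n - 2 * r)) ^ 2 := by
  linear_combination -(x ^ 2 * (x ^ 2 + 4 * c * r ^ 2)) * hmn - m ^ 2 * x ^ 2 * hs

theorem mul_sq_add_mul_sub_two_mul_nonneg (hr : 0 ≤ r) (hrn : 2 * r ≤ n) (hc : 0 ≤ c) :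
    0 ≤ n * x ^ 2 + 2 * c * r ^ 2 * (n - 2 * r) := by
  have : 0 ≤ n := by linarith
  have : 0 ≤ n - 2 * r := by linarith
  positivity

theorem mul_mul_le_of_sq_add_sq_eq (hr : 0 ≤ r) (hrn : 2 * r ≤ n) (hc : 0 ≤ c)
    (hmn : m ^ 2 + 4 * r ^ 2 = n ^ 2) (hs : s ^ 2 = x ^ 2 + 4 * c * r ^ 2) :
    m * x * s ≤ n * x ^ 2 + 2 * c * r ^ 2 * (n - 2 * r) := by
  refine (abs_le_of_sq_le_sq' ?_ (mul_sq_add_mul_sub_two_mul_nonneg hr hrn hc)).2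
  nlinarith [sq_sub_sq_eq_four_mul_sq hmn hs, sq_nonneg (r * (x ^ 2 - c * r * (n - 2 * r)))]

theorem mul_mul_eq_of_sq_eq (hr : 0 ≤ r) (hrn : 2 * r ≤ n) (hc : 0 ≤ c) (hm : 0 ≤ m)
    (hx : 0 ≤ x) (hs0 : 0 ≤ s) (hmn : m ^ 2 + 4 * r ^ 2 = n ^ 2)
    (hs : s ^ 2 = x ^ 2 + 4 * c * r ^ 2) (hx2 : x ^ 2 = c * r * (n - 2 * r)) :
    m * x * s = n * x ^ 2 + 2 * c * r ^ 2 * (n - 2 * r) := by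
  refine (pow_left_inj₀ (by positivity) (mul_sq_add_mul_sub_two_mul_nonneg hr hrn hc)
    two_ne_zero).1 ?_
  linear_combination
    -(sq_sub_sq_eq_four_mul_sq hmn hs) - 4 * r ^ 2 * (x ^ 2 - c * r * (n - 2 * r)) * hx2

end

theorem pinchAlpha_eq_add_div {p n : ℕ} {r : ℝ} (hr : r ≠ 0) (hr2 : r ^ 2 = p * ((n : ℝ) - p))
    (c h : ℝ) :
    pinchAlpha c p n h = 2 * c * r +
      (n * (n * h) ^ 2 + 2 * c * r ^ 2 * (n - 2 * r) -
        |(n : ℝ) - 2 * p| * (n * h) * √((n * h) ^ 2 + 4 * c * r ^ 2)) / (2 * r ^ 2) := by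
  have hsqrt : (n : ℝ) ^ 2 * h ^ 2 + 4 * c * p * (n - p) = (n * h) ^ 2 + 4 * c * r ^ 2 := by
    rw [hr2]; ring
  rw [pinchAlpha, hsqrt, mul_assoc 2 (p : ℝ), ← hr2]
  field_simp
  ring

theorem pinchAlpha_min_over_h_general (c : ℝ) (hc : 0 ≤ c) (n p : ℕ)
    (hp1 : 1 ≤ p) (hp2 : p ≤ n - 1) :
    (∀ h : ℝ, 0 ≤ h → 2 * c * Real.sqrt (p * ((n : ℝ) - p)) ≤ pinchAlpha c p n h) ∧
      (∃ h : ℝ, 0 ≤ h ∧ pinchAlpha c p n h = 2 * c * Real.sqrt (p * ((n : ℝ) - p))) := by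
  have hq : (0 : ℝ) < p * ((n : ℝ) - p) := by
    have : (p : ℝ) + 1 ≤ n := by exact_mod_cast (by omega : p + 1 ≤ n)
    have : (1 : ℝ) ≤ p := by exact_mod_cast hp1
    nlinarith
  set r := √(p * ((n : ℝ) - p))
  have hr : 0 < r := Real.sqrt_pos.2 hq
  have hr2 : r ^ 2 = p * ((n : ℝ) - p) := Real.sq_sqrt hq.le
  have hmn : |(n : ℝ) - 2 * p| ^ 2 + 4 * r ^ 2 = (n : ℝ) ^ 2 := by rw [sq_abs, hr2]; ring
  have hrn : 2 * r ≤ n := by nlinarith [sq_nonneg |(n : ℝ) - 2 * p|]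
  have hs (x : ℝ) : √(x ^ 2 + 4 * c * r ^ 2) ^ 2 = x ^ 2 + 4 * c * r ^ 2 :=
    Real.sq_sqrt (by positivity)
  refine ⟨fun h _ => ?_, √(c * r * (n - 2 * r)) / n, by positivity, ?_⟩
  · rw [pinchAlpha_eq_add_div hr.ne' hr2]
    exact le_add_of_nonneg_right <| div_nonneg
      (sub_nonneg.2 (mul_mul_le_of_sq_add_sq_eq hr.le hrn hc hmn (hs _))) (by positivity)
  · have hx : (n : ℝ) * (√(c * r * (n - 2 * r)) / n) = √(c * r * (n - 2 * r)) :=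
      mul_div_cancel₀ _ (by linarith)
    have hx2 : √(c * r * (n - 2 * r)) ^ 2 = c * r * (n - 2 * r) :=
      Real.sq_sqrt (mul_nonneg (mul_nonneg hc hr.le) (by linarith))
    rw [pinchAlpha_eq_add_div hr.ne' hr2, hx, mul_mul_eq_of_sq_eq hr.le hrn hc (abs_nonneg _)
      (Real.sqrt_nonneg _) (Real.sqrt_nonneg _) hmn (hs _) hx2, sub_self, zero_div, add_zero]

/-- For fixed `c ≥ 0`, `n ≥ 2` and `1 ≤ p ≤ n−1`, the minimum over
`h ≥ 0` of `α(c,p,n,h)` equals `2c·√(p(n−p))`. -/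
theorem pinchAlpha_min_over_h (c : ℝ) (hc : 0 ≤ c) (n p : ℕ) (hn : 2 ≤ n)
    (hp1 : 1 ≤ p) (hp2 : p ≤ n - 1) :
    (∀ h : ℝ, 0 ≤ h → 2 * c * Real.sqrt (p * ((n : ℝ) - p)) ≤ pinchAlpha c p n h) ∧
      (∃ h : ℝ, 0 ≤ h ∧ pinchAlpha c p n h = 2 * c * Real.sqrt (p * ((n : ℝ) - p))) :=
  pinchAlpha_min_over_h_general c hc n p hp1 hp2
end

section
/- The inequality c ≥ (1/n)·b² + (|n−2p|·h/√(n·p(n−p)))·b − h², for nonnegative reals b, h, c and integers n ≥ 2, 1 ≤ p ≤ n−1, is equivalent to b² + n·h² ≤ n·c + n³h²/(2p(n−p)) − n|n−2p|·h·√(n²h²+4c·p(n−p))/(2p(n−p)) (i.e. to |B|² ≤ α(c,p,n,h) with |B|² = b² + n·h²). -/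
theorem sub_mul_add_nonpos_iff {α : Type*} [Ring α] [LinearOrder α] [IsStrictOrderedRing α]
    {x u v : α} (hx : 0 ≤ x) (hu : 0 ≤ u) (hv : 0 ≤ v) :
    (x - u) * (x + v) ≤ 0 ↔ x ≤ u := by
  refine ⟨fun H ↦ ?_, fun H ↦ mul_nonpos_of_nonpos_of_nonneg (sub_nonpos.2 H) (add_nonneg hx hv)⟩
  by_contra! hux
  exact (mul_pos (sub_pos.2 hux) (add_pos_of_pos_of_nonneg (hu.trans_lt hux) hv)).not_ge H

section
variable {N P m s r b h c : ℝ}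

theorem pinch_quadratic_eq_mul (hN : N ≠ 0) (hs : s ≠ 0)
    (hs2 : s ^ 2 = N * P * (N - P)) (hr2 : r ^ 2 = N ^ 2 * h ^ 2 + 4 * c * P * (N - P))
    (hm2 : m ^ 2 = (N - 2 * P) ^ 2) :
    N * (1 / N * b ^ 2 + m * h / s * b - h ^ 2 - c) =
      (b - N * (r - m * h) / (2 * s)) * (b + N * (r + m * h) / (2 * s)) := by
  field_simp
  linear_combination N ^ 2 * hr2 - N ^ 2 * h ^ 2 * hm2 - 4 * N * (h ^ 2 + c) * hs2

theorem pinch_root_sq_add_eq (hP : P ≠ 0) (hNP : N - P ≠ 0)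
    (hs2 : s ^ 2 = N * P * (N - P)) (hr2 : r ^ 2 = N ^ 2 * h ^ 2 + 4 * c * P * (N - P))
    (hm2 : m ^ 2 = (N - 2 * P) ^ 2) :
    (N * (r - m * h) / (2 * s)) ^ 2 + N * h ^ 2 =
      N * c + N ^ 3 * h ^ 2 / (2 * P * (N - P)) - N * m * h * r / (2 * P * (N - P)) := by
  simp only [div_pow, mul_pow, hs2]
  field_simp
  linear_combination N * hr2 + N * h ^ 2 * hm2

end

theorem pinching_equivalence_real {N P b h c : ℝ} (hP : 0 < P) (hPN : P < N) (hb : 0 ≤ b)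
    (hc : 0 ≤ c) :
    (1 / N * b ^ 2 + |N - 2 * P| * h / √(N * P * (N - P)) * b - h ^ 2 ≤ c) ↔
      b ^ 2 + N * h ^ 2 ≤ N * c + N ^ 3 * h ^ 2 / (2 * P * (N - P)) -
        N * |N - 2 * P| * h * √(N ^ 2 * h ^ 2 + 4 * c * P * (N - P)) / (2 * P * (N - P)) := by
  set m := |N - 2 * P|
  set s := √(N * P * (N - P))
  set r := √(N ^ 2 * h ^ 2 + 4 * c * P * (N - P))
  have hN : 0 < N := hP.trans hPN
  have hNP : 0 < N - P := sub_pos.2 hPN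
  have hs : 0 < s := Real.sqrt_pos.2 (by positivity)
  have hs2 : s ^ 2 = N * P * (N - P) := Real.sq_sqrt (by positivity)
  have hr2 : r ^ 2 = N ^ 2 * h ^ 2 + 4 * c * P * (N - P) := Real.sq_sqrt (by positivity)
  have hm2 : m ^ 2 = (N - 2 * P) ^ 2 := sq_abs _
  have hmh : |m * h| ≤ r := Real.abs_le_sqrt <| by
    have : 0 ≤ P * (N - P) * (c + h ^ 2) := by positivity
    rw [mul_pow, hm2]; linarith
  obtain ⟨hmh_lower, hmh_upper⟩ := abs_le.1 hmh
  have hu : 0 ≤ N * (r - m * h) / (2 * s) :=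
    div_nonneg (mul_nonneg hN.le (by linarith)) (by positivity)
  have hv : 0 ≤ N * (r + m * h) / (2 * s) :=
    div_nonneg (mul_nonneg hN.le (by linarith)) (by positivity)
  calc _ ↔ N * (1 / N * b ^ 2 + m * h / s * b - h ^ 2 - c) ≤ N * 0 := by
        rw [mul_le_mul_iff_right₀ hN, sub_nonpos]
    _ ↔ (b - N * (r - m * h) / (2 * s)) * (b + N * (r + m * h) / (2 * s)) ≤ 0 := by
        rw [mul_zero, pinch_quadratic_eq_mul hN.ne' hs.ne' hs2 hr2 hm2]
    _ ↔ b ≤ N * (r - m * h) / (2 * s) := sub_mul_add_nonpos_iff hb hu hv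
    _ ↔ b ^ 2 + N * h ^ 2 ≤ (N * (r - m * h) / (2 * s)) ^ 2 + N * h ^ 2 := by
        rw [add_le_add_iff_right, sq_le_sq₀ hb hu]
    _ ↔ _ := by rw [pinch_root_sq_add_eq hP.ne' hNP.ne' hs2 hr2 hm2]

theorem pinching_equivalence_general (b h c : ℝ) (hb : 0 ≤ b) (hc : 0 ≤ c)
    (n p : ℕ) (hp1 : 1 ≤ p) (hp2 : p ≤ n - 1) :
    (1 / n * b ^ 2 + |(n : ℝ) - 2 * p| * h / Real.sqrt (n * p * ((n : ℝ) - p)) * b - h ^ 2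
        ≤ c) ↔
      b ^ 2 + n * h ^ 2 ≤ pinchAlpha c p n h := by
  have hP : (0 : ℝ) < p := by exact_mod_cast hp1
  have hPN : (p : ℝ) < n := by exact_mod_cast (by omega : p < n)
  exact pinching_equivalence_real hP hPN hb hc

/-- For nonnegative reals `b, h, c`, integers `n ≥ 2`, `1 ≤ p ≤ n−1`,
the inequality `c ≥ b²/n + |n−2p|·h·b/√(n·p(n−p)) − h²` is equivalent to
`b² + n·h² ≤ α(c,p,n,h)`. -/
theorem pinching_equivalence (b h c : ℝ) (hb : 0 ≤ b) (hh : 0 ≤ h) (hc : 0 ≤ c)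
    (n p : ℕ) (hn : 2 ≤ n) (hp1 : 1 ≤ p) (hp2 : p ≤ n - 1) :
    (1 / n * b ^ 2 + |(n : ℝ) - 2 * p| * h / Real.sqrt (n * p * ((n : ℝ) - p)) * b - h ^ 2
        ≤ c) ↔
      b ^ 2 + n * h ^ 2 ≤ pinchAlpha c p n h :=
  pinching_equivalence_general b h c hb hc n p hp1 hp2
end

section
/- Clifford torus Ricci identity: for 1 < p < n−1 and μ = √((p−1)/(n−p−1)), the Clifford torus Sᵖ(μ/√(1+μ²)) × S^{n−p}(1/√(1+μ²)) ⊂ S^{n+1}(1) is Einstein with Ric = (n−2)g; i.e. (p−1)(1+μ^{−2}) = (n−p−1)(1+μ²) = n−2. Moreover with H = (pμ^{−1}−(n−p)μ)/n one has the identity 1 + H² = (n−2)((n+2)p(n−p)−n²)/(n²(p−1)(n−p−1)), and hence Ric_min − (n−1 − (n−2)p(n−p)/((n+2)p(n−p)−n²))(1+H²) = 0. -/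
/-!
Write `a = p - 1`, `b = n - p - 1`, so that `μ² = a / b` and `n - 2 = a + b`; the two Ricci
identities are then `a (1 + b / a) = a + b = b (1 + a / b)`. For the mean curvature,
`n² a b H² = (p b - (n - p) a)² = (n - 2p)²`, and everything else follows from the polynomial identity
`n² a b + (n - 2p)² = (n - 2) ((n + 2) p (n - p) - n²)`, which also shows that the denominator
`(n + 2) p (n - p) - n²` is positive.
-/

namespace CliffordTorus

variable {n p μ : ℝ}

lemma sub_one_mul_one_add_inv_sq (hp : 1 < p) (hpn : p + 1 < n)
    (hμ : μ ^ 2 = (p - 1) / (n - p - 1)) : (p - 1) * (1 + μ⁻¹ ^ 2) = n - 2 := by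
  have ha : p - 1 ≠ 0 := by linarith
  have hb : n - p - 1 ≠ 0 := by linarith
  rw [inv_pow, hμ, inv_div]
  field_simp
  ring

lemma sub_sub_one_mul_one_add_sq (hpn : p + 1 < n)
    (hμ : μ ^ 2 = (p - 1) / (n - p - 1)) : (n - p - 1) * (1 + μ ^ 2) = n - 2 := by
  have hb : n - p - 1 ≠ 0 := by linarith
  rw [hμ]
  field_simp
  ring

lemma mul_pinching_denominator_eq :
    n ^ 2 * (p - 1) * (n - p - 1) + (n - 2 * p) ^ 2 = (n - 2) * ((n + 2) * p * (n - p) - n ^ 2) := by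
  ring

lemma pinching_denominator_pos (hp : 1 < p) (hpn : p + 1 < n) :
    0 < (n + 2) * p * (n - p) - n ^ 2 := by
  have hlhs : 0 < n ^ 2 * (p - 1) * (n - p - 1) + (n - 2 * p) ^ 2 := by
    have : 0 < n ^ 2 * (p - 1) * (n - p - 1) :=
      mul_pos (mul_pos (pow_pos (by linarith) 2) (by linarith)) (by linarith)
    positivity
  rw [mul_pinching_denominator_eq] at hlhs
  exact pos_of_mul_pos_right hlhs (by linarith)

lemma one_add_meanCurvature_sq (hp : 1 < p) (hpn : p + 1 < n)
    (hμ : μ ^ 2 = (p - 1) / (n - p - 1)) :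
    1 + ((p * μ⁻¹ - (n - p) * μ) / n) ^ 2 =
      (n - 2) * ((n + 2) * p * (n - p) - n ^ 2) / (n ^ 2 * (p - 1) * (n - p - 1)) := by
  have hn : n ≠ 0 := by linarith
  have ha : p - 1 ≠ 0 := by linarith
  have hb : n - p - 1 ≠ 0 := by linarith
  have hμ0 : μ ≠ 0 := by
    rintro rfl
    rw [eq_comm, zero_pow two_ne_zero, div_eq_zero_iff] at hμ
    tauto
  have hexpand : ((p * μ⁻¹ - (n - p) * μ) / n) ^ 2 =
      (p ^ 2 * (μ ^ 2)⁻¹ - 2 * p * (n - p) + (n - p) ^ 2 * μ ^ 2) / n ^ 2 := by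
    field_simp
    ring
  rw [hexpand, hμ, ← mul_pinching_denominator_eq]
  field_simp
  ring

lemma pinching_defect_eq_zero (hp : 1 < p) (hpn : p + 1 < n) {H : ℝ}
    (hH : 1 + H ^ 2 =
      (n - 2) * ((n + 2) * p * (n - p) - n ^ 2) / (n ^ 2 * (p - 1) * (n - p - 1))) :
    (n - 2) - (n - 1 - (n - 2) * p * (n - p) / ((n + 2) * p * (n - p) - n ^ 2)) * (1 + H ^ 2)
      = 0 := by
  have hn : n ≠ 0 := by linarith
  have ha : p - 1 ≠ 0 := by linarith
  have hb : n - p - 1 ≠ 0 := by linarith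
  have hD := (pinching_denominator_pos hp hpn).ne'
  rw [hH]
  generalize hDdef : (n + 2) * p * (n - p) - n ^ 2 = D at hD ⊢
  field_simp
  rw [← hDdef]
  ring

end CliffordTorus

open CliffordTorus in
/-- Clifford torus Ricci identity.  For integers `1 < p < n−1` and
`μ = √((p−1)/(n−p−1))`, the Clifford torus `Sᵖ(μ/√(1+μ²)) × S^{n−p}(1/√(1+μ²))` in
`S^{n+1}(1)` is Einstein with `Ric = (n−2)g`, i.e.
`(p−1)(1+μ⁻²) = (n−p−1)(1+μ²) = n−2`.  Moreover, with `H = (pμ⁻¹−(n−p)μ)/n`,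
`1 + H² = (n−2)((n+2)p(n−p)−n²)/(n²(p−1)(n−p−1))`, and hence
`Ric_min − (n−1 − (n−2)p(n−p)/((n+2)p(n−p)−n²))(1+H²) = 0`. -/
theorem clifford_torus_einstein (n p : ℕ) (hp1 : 1 < p) (hp2 : p < n - 1)
    (μ H : ℝ) (hμ : μ = Real.sqrt (((p : ℝ) - 1) / ((n : ℝ) - p - 1)))
    (hH : H = ((p : ℝ) * μ⁻¹ - ((n : ℝ) - p) * μ) / n) :
    ((p : ℝ) - 1) * (1 + (μ⁻¹) ^ 2) = (n : ℝ) - 2 ∧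
      ((n : ℝ) - p - 1) * (1 + μ ^ 2) = (n : ℝ) - 2 ∧
      1 + H ^ 2 =
        ((n : ℝ) - 2) * (((n : ℝ) + 2) * p * ((n : ℝ) - p) - n ^ 2) /
          ((n : ℝ) ^ 2 * ((p : ℝ) - 1) * ((n : ℝ) - p - 1)) ∧
      ((n : ℝ) - 2) -
          ((n : ℝ) - 1 -
            ((n : ℝ) - 2) * p * ((n : ℝ) - p) /
              (((n : ℝ) + 2) * p * ((n : ℝ) - p) - n ^ 2)) * (1 + H ^ 2) = 0 := by
  have hp : (1 : ℝ) < p := by exact_mod_cast hp1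
  have hpn : (p : ℝ) + 1 < n := by exact_mod_cast (by omega : p + 1 < n)
  have hμ2 : μ ^ 2 = ((p : ℝ) - 1) / ((n : ℝ) - p - 1) := by
    rw [hμ, Real.sq_sqrt (div_nonneg (by linarith) (by linarith))]
  have hH2 := hH ▸ one_add_meanCurvature_sq hp hpn hμ2
  exact ⟨sub_one_mul_one_add_inv_sq hp hpn hμ2, sub_sub_one_mul_one_add_sq hpn hμ2, hH2,
    pinching_defect_eq_zero hp hpn hH2⟩
end
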